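/- With the tetrahedra T₁,…,T₆ and piecewise quadratic φ as in the mid-vertical-edge patch (vertices x₁=(0,0,0), x₂=(−1,0,0), x₃=(−1,−1,0), x₄=(0,−1,0), x₅=(0,0,1), x₆=(1,0,1), x₇=(1,1,1), x₈=(0,1,1); T₁=[x₁,x₅,x₆,x₇], T₂=[x₁,x₅,x₇,x₈], T₃=[x₁,x₂,x₅,x₈], T₄=[x₁,x₂,x₃,x₅], T₅=[x₁,x₃,x₄,x₅], T₆=[x₁,x₄,x₅,x₆]; φ = 4(z−1)(x−z), 4(z−1)(y−z), −4(y−z)(x−z+1), 4(x−z+1)z, 4z(y−z+1), −4(y−z+1)(x−z) on T₁,…,T₆ respectively), let e be the piecewise cubic equal to y(2x−1)(x−1)/2 on T₁, x(y−1)(2x−1)/2 on T₂, xy(2x+1)/2 on T₃, y(1+x)(2x+1)/2 on T₄, x(y+1)(2x+1)/2 on T₅, and xy(2x−1)/2 on T₆. Then Σᵢ₌₁⁶ ∫_{Tᵢ} ∇e·∇φ dV = 0. -/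

import Mathlib

open MeasureTheory

noncomputable section

abbrev E3 := EuclideanSpace ℝ (Fin 3)

def pt (a b c : ℝ) : E3 := (WithLp.equiv 2 (Fin 3 → ℝ)).symm ![a, b, c]

def x₁ : E3 := pt 0 0 0
def x₂ : E3 := pt (-1) 0 0
def x₃ : E3 := pt (-1) (-1) 0
def x₄ : E3 := pt 0 (-1) 0
def x₅ : E3 := pt 0 0 1
def x₆ : E3 := pt 1 0 1
def x₇ : E3 := pt 1 1 1
def x₈ : E3 := pt 0 1 1

def T₁ : Set E3 := convexHull ℝ {x₁, x₅, x₆, x₇}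
def T₂ : Set E3 := convexHull ℝ {x₁, x₅, x₇, x₈}
def T₃ : Set E3 := convexHull ℝ {x₁, x₂, x₅, x₈}
def T₄ : Set E3 := convexHull ℝ {x₁, x₂, x₃, x₅}
def T₅ : Set E3 := convexHull ℝ {x₁, x₃, x₄, x₅}
def T₆ : Set E3 := convexHull ℝ {x₁, x₄, x₅, x₆}

/-- The pieces of the `P₂` nodal basis function `φ` on `T₁,…,T₆`. -/
def φ₁ : E3 → ℝ := fun p => 4 * (p 2 - 1) * (p 0 - p 2)
def φ₂ : E3 → ℝ := fun p => 4 * (p 2 - 1) * (p 1 - p 2)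
def φ₃ : E3 → ℝ := fun p => -4 * (p 1 - p 2) * (p 0 - p 2 + 1)
def φ₄ : E3 → ℝ := fun p => 4 * (p 0 - p 2 + 1) * p 2
def φ₅ : E3 → ℝ := fun p => 4 * p 2 * (p 1 - p 2 + 1)
def φ₆ : E3 → ℝ := fun p => -4 * (p 1 - p 2 + 1) * (p 0 - p 2)

/-- The interpolation-error pieces on `T₁,…,T₆`. -/
def e₁ : E3 → ℝ := fun p => p 1 * (2 * p 0 - 1) * (p 0 - 1) / 2
def e₂ : E3 → ℝ := fun p => p 0 * (p 1 - 1) * (2 * p 0 - 1) / 2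
def e₃ : E3 → ℝ := fun p => p 0 * p 1 * (2 * p 0 + 1) / 2
def e₄ : E3 → ℝ := fun p => p 1 * (1 + p 0) * (2 * p 0 + 1) / 2
def e₅ : E3 → ℝ := fun p => p 0 * (p 1 + 1) * (2 * p 0 + 1) / 2
def e₆ : E3 → ℝ := fun p => p 0 * p 1 * (2 * p 0 - 1) / 2

/-! ### Auxiliary machinery: the point reflection `σ : q ↦ x₅ - q` maps
`T₁ ↦ T₄`, `T₂ ↦ T₅`, `T₃ ↦ T₆`, intertwines the integrands up to a sign,
and preserves volume, so the six integrals cancel in pairs. -/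

@[fun_prop]
lemma diff_proj (i : Fin 3) : Differentiable ℝ (fun p : E3 => p i) :=
  (PiLp.proj 2 (fun _ : Fin 3 => ℝ) i).differentiable

lemma sub_coord (a b : E3) (i : Fin 3) : (a - b) i = a i - b i := rfl

lemma pt_sub (a b c d e f : ℝ) : pt a b c - pt d e f = pt (a-d) (b-e) (c-f) := by
  ext i; fin_cases i <;> rfl

lemma grad_const_sub (f : E3 → ℝ) (hf : Differentiable ℝ f) (c p : E3) :
    gradient (fun x => f (c - x)) p = -gradient f (c - p) := by
  have h1 : HasFDerivAt (fun x : E3 => c - x) (-(ContinuousLinearMap.id ℝ E3)) p :=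
    (hasFDerivAt_id p).const_sub c
  have h3 : HasFDerivAt (fun x => f (c - x)) (-(fderiv ℝ f (c - p))) p := by
    exact ((hf (c - p)).hasFDerivAt.comp p h1).congr_fderiv (by simp)
  rw [gradient, gradient, h3.fderiv, map_neg]

lemma grad_neg (f : E3 → ℝ) (p : E3) : gradient (fun x => -f x) p = -gradient f p := by
  rw [gradient, gradient, fderiv_fun_neg, map_neg]

lemma image_hull (s : Set E3) :
    (fun q : E3 => x₅ - q) '' (convexHull ℝ s) = convexHull ℝ ((fun q : E3 => x₅ - q) '' s) := by
  have h : (fun q : E3 => x₅ - q) = ⇑((AffineEquiv.constVSub ℝ x₅).toAffineMap) := by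
    funext q; simp [vsub_eq_sub]
  rw [h, AffineMap.image_convexHull]

/-- The key cancellation lemma: if `σ = (x₅ - ·)` carries the pair `(eB, φB)` to
`(-eA, φA)` and `S'` is the `σ`-image of `S`, then the two integrals are opposite. -/
lemma pair_integral (eA φA eB φB : E3 → ℝ) (S S' : Set E3)
    (heB : Differentiable ℝ eB) (hφB : Differentiable ℝ φB)
    (hS : S' = (fun q : E3 => x₅ - q) '' S)
    (he : ∀ p, eB (x₅ - p) = -eA p) (hφ : ∀ p, φB (x₅ - p) = φA p) :
    (∫ p in S', (inner ℝ (gradient eB p) (gradient φB p) : ℝ))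
      = -∫ p in S, (inner ℝ (gradient eA p) (gradient φA p) : ℝ) := by
  rw [hS, MeasurePreserving.setIntegral_image_emb
    (Measure.measurePreserving_sub_left volume x₅) (Homeomorph.subLeft x₅).measurableEmbedding]
  have key : (fun p => (inner ℝ (gradient eB (x₅ - p)) (gradient φB (x₅ - p)) : ℝ))
      = fun p => -(inner ℝ (gradient eA p) (gradient φA p) : ℝ) := by
    funext p
    have g1 : gradient eB (x₅ - p) = gradient eA p := by
      have h := grad_const_sub eB heB x₅ p
      rw [show (fun x => eB (x₅ - x)) = fun x => -eA x from funext he, grad_neg] at h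
      exact neg_injective h.symm
    have g2 : gradient φB (x₅ - p) = -gradient φA p := by
      have h := grad_const_sub φB hφB x₅ p
      rw [show (fun x => φB (x₅ - x)) = fun x => φA x from funext hφ] at h
      rw [← neg_neg (gradient φB (x₅ - p)), ← h]
    rw [g1, g2, inner_neg_right]
  rw [key, integral_neg]

lemma diff_e₄ : Differentiable ℝ e₄ := by unfold e₄; fun_prop
lemma diff_e₅ : Differentiable ℝ e₅ := by unfold e₅; fun_prop
lemma diff_e₆ : Differentiable ℝ e₆ := by unfold e₆; fun_prop
lemma diff_φ₄ : Differentiable ℝ φ₄ := by unfold φ₄; fun_prop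
lemma diff_φ₅ : Differentiable ℝ φ₅ := by unfold φ₅; fun_prop
lemma diff_φ₆ : Differentiable ℝ φ₆ := by unfold φ₆; fun_prop

lemma s11 : x₅ - x₁ = x₅ := by rw [x₅, x₁, pt_sub]; norm_num
lemma s55 : x₅ - x₅ = x₁ := by rw [x₅, x₁, pt_sub]; norm_num
lemma s56 : x₅ - x₆ = x₂ := by rw [x₅, x₆, x₂, pt_sub]; norm_num
lemma s57 : x₅ - x₇ = x₃ := by rw [x₅, x₇, x₃, pt_sub]; norm_num
lemma s58 : x₅ - x₈ = x₄ := by rw [x₅, x₈, x₄, pt_sub]; norm_num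
lemma s52 : x₅ - x₂ = x₆ := by rw [x₅, x₂, x₆, pt_sub]; norm_num

lemma hT4 : T₄ = (fun q : E3 => x₅ - q) '' T₁ := by
  rw [T₁, T₄, image_hull]
  congr 1
  rw [Set.image_insert_eq, Set.image_insert_eq, Set.image_insert_eq, Set.image_singleton,
    s11, s55, s56, s57]
  ext y; simp; tauto

lemma hT5 : T₅ = (fun q : E3 => x₅ - q) '' T₂ := by
  rw [T₂, T₅, image_hull]
  congr 1
  rw [Set.image_insert_eq, Set.image_insert_eq, Set.image_insert_eq, Set.image_singleton,
    s11, s55, s57, s58]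
  ext y; simp; tauto

lemma hT6 : T₆ = (fun q : E3 => x₅ - q) '' T₃ := by
  rw [T₃, T₆, image_hull]
  congr 1
  rw [Set.image_insert_eq, Set.image_insert_eq, Set.image_insert_eq, Set.image_singleton,
    s11, s52, s55, s58]
  ext y; simp; tauto

lemma he4 : ∀ p, e₄ (x₅ - p) = -e₁ p := by
  intro p; simp [e₁, e₄, sub_coord, x₅, pt]; ring
lemma hφ4 : ∀ p, φ₄ (x₅ - p) = φ₁ p := by
  intro p; simp [φ₁, φ₄, sub_coord, x₅, pt]; ring
lemma he5 : ∀ p, e₅ (x₅ - p) = -e₂ p := by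
  intro p; simp [e₂, e₅, sub_coord, x₅, pt]; ring
lemma hφ5 : ∀ p, φ₅ (x₅ - p) = φ₂ p := by
  intro p; simp [φ₂, φ₅, sub_coord, x₅, pt]; ring
lemma he6 : ∀ p, e₆ (x₅ - p) = -e₃ p := by
  intro p; simp [e₃, e₆, sub_coord, x₅, pt]; ring
lemma hφ6 : ∀ p, φ₆ (x₅ - p) = φ₃ p := by
  intro p; simp [φ₃, φ₆, sub_coord, x₅, pt]; ring

/-- The sum of the six integrals `∫_{Tᵢ} ∇e·∇φ` vanishes (case `p = x²y`). -/
theorem patch_orthogonality_x_sq_y :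
    (∫ p in T₁, (inner ℝ (gradient e₁ p) (gradient φ₁ p) : ℝ)) +
    (∫ p in T₂, (inner ℝ (gradient e₂ p) (gradient φ₂ p) : ℝ)) +
    (∫ p in T₃, (inner ℝ (gradient e₃ p) (gradient φ₃ p) : ℝ)) +
    (∫ p in T₄, (inner ℝ (gradient e₄ p) (gradient φ₄ p) : ℝ)) +
    (∫ p in T₅, (inner ℝ (gradient e₅ p) (gradient φ₅ p) : ℝ)) +
    (∫ p in T₆, (inner ℝ (gradient e₆ p) (gradient φ₆ p) : ℝ)) = 0 := by
  rw [pair_integral e₁ φ₁ e₄ φ₄ T₁ T₄ diff_e₄ diff_φ₄ hT4 he4 hφ4,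
      pair_integral e₂ φ₂ e₅ φ₅ T₂ T₅ diff_e₅ diff_φ₅ hT5 he5 hφ5,
      pair_integral e₃ φ₃ e₆ φ₆ T₃ T₆ diff_e₆ diff_φ₆ hT6 he6 hφ6]
  ring
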